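/- arXiv:1907.12459 — 6 statements merged into one kernel-verified Lean document; each statement's English description precedes it below -/
import Mathlib

section
/- For every natural number n, the finite simple continued fraction [4,4,…,4,3] consisting of n fours followed by a final entry 3 equals F_{3n+4}/F_{3n+1}. -/
def cf : List ℤ → ℚ
  | [] => 0
  | [a] => (a : ℚ)
  | a :: b :: l => (a : ℚ) + (cf (b :: l))⁻¹

lemma fib_step (k : ℕ) : Nat.fib (k + 6) = 4 * Nat.fib (k + 3) + Nat.fib k := by
  simp [Nat.fib_add_two, show k+6 = k+4+2 by ring, show k+5 = k+3+2 by ring,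
    show k+4 = k+2+2 by ring, show k+3 = k+1+2 by ring]
  ring

theorem cf_fours_three (n : ℕ) :
    cf (List.replicate n 4 ++ [3]) =
      (Nat.fib (3 * n + 4) : ℚ) / (Nat.fib (3 * n + 1) : ℚ) := by
  induction n with
  | zero => norm_num [cf]
  | succ n ih =>
    have hne : (List.replicate n 4 ++ [3] : List ℤ) ≠ [] := by simp
    obtain ⟨b, l, hbl⟩ : ∃ b l, (List.replicate n 4 ++ [3] : List ℤ) = b :: l := by
      cases h : (List.replicate n 4 ++ [3] : List ℤ) with
      | nil => exact absurd h hne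
      | cons b l => exact ⟨b, l, rfl⟩
    have hrep : (List.replicate (n+1) 4 ++ [3] : List ℤ) = 4 :: (List.replicate n 4 ++ [3]) := by
      simp [List.replicate_succ]
    rw [hrep, hbl]
    have : cf (4 :: b :: l) = 4 + (cf (b :: l))⁻¹ := by simp [cf]
    rw [this, ← hbl, ih]
    have h1 : (0:ℚ) < Nat.fib (3 * n + 1) := by
      exact_mod_cast Nat.fib_pos.2 (by omega)
    have h4 : (0:ℚ) < Nat.fib (3 * n + 4) := by
      exact_mod_cast Nat.fib_pos.2 (by omega)
    have e1 : 3 * (n+1) + 4 = (3*n+1) + 6 := by ring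
    have e2 : 3 * (n+1) + 1 = (3*n+1) + 3 := by ring
    have e3 : 3 * n + 4 = (3*n+1) + 3 := by ring
    rw [e1, e2, fib_step (3*n+1), e3]
    have ha : (Nat.fib (3*n+1+3) : ℚ) ≠ 0 := by rw [← e3]; exact h4.ne'
    push_cast
    field_simp
end

section
/- For every natural number n, the finite simple continued fraction [4,4,…,4,5] consisting of n fours followed by a final entry 5 equals F_{3n+5}/F_{3n+2}. -/
theorem cf_fours_five (n : ℕ) :
    cf (List.replicate n 4 ++ [5]) =
      (Nat.fib (3 * n + 5) : ℚ) / (Nat.fib (3 * n + 2) : ℚ) := by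
  induction n with
  | zero => norm_num [cf]
  | succ n ih =>
    have hne : List.replicate n 4 ++ [5] ≠ ([] : List ℤ) := by simp
    obtain ⟨b, l, hb⟩ := List.exists_cons_of_ne_nil hne
    have h2 : List.replicate (n+1) 4 ++ [5] = (4 : ℤ) :: b :: l := by
      simp [List.replicate_succ, hb]
    rw [h2, cf, ← hb, ih]
    have h5 : 0 < Nat.fib (3 * n + 5) := Nat.fib_pos.2 (by omega)
    have h2' : 0 < Nat.fib (3 * n + 2) := Nat.fib_pos.2 (by omega)
    have gen : ∀ m, Nat.fib (m+6) = 4 * Nat.fib (m+3) + Nat.fib m := by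
      intro m
      have h1 : Nat.fib (m+2) = Nat.fib m + Nat.fib (m+1) := Nat.fib_add_two
      have h2 : Nat.fib (m+3) = Nat.fib (m+1) + Nat.fib (m+2) := Nat.fib_add_two
      have h3 : Nat.fib (m+4) = Nat.fib (m+2) + Nat.fib (m+3) := Nat.fib_add_two
      have h4 : Nat.fib (m+5) = Nat.fib (m+3) + Nat.fib (m+4) := Nat.fib_add_two
      have h6 : Nat.fib (m+6) = Nat.fib (m+4) + Nat.fib (m+5) := Nat.fib_add_two
      omega
    have key : Nat.fib (3 * (n+1) + 5) = 4 * Nat.fib (3 * n + 5) + Nat.fib (3 * n + 2) := by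
      have := gen (3*n+2)
      have e : 3 * (n+1) + 5 = (3*n+2) + 6 := by omega
      have e2 : 3 * n + 5 = (3*n+2) + 3 := by omega
      rw [e, e2, this]
    have key2 : 3 * (n+1) + 2 = 3 * n + 5 := by omega
    rw [key, key2]
    push_cast
    rw [inv_div]
    field_simp
    try ring
end

section
/- Let k ≥ 0 be an integer and define the sequence G by G_0 = k, G_1 = 1, and G_n = G_{n-1} + G_{n-2} for n ≥ 2. Then for every natural number m, the finite simple continued fraction [4,4,…,4,2k+3] consisting of m fours followed by a final entry 2k+3 equals G_{3m+4}/G_{3m+1}. -/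
theorem cf_fours_gibonacci (k : ℤ) (hk : 0 ≤ k) (G : ℕ → ℤ)
    (hG0 : G 0 = k) (hG1 : G 1 = 1)
    (hGrec : ∀ n, G (n + 2) = G (n + 1) + G n) (m : ℕ) :
    cf (List.replicate m 4 ++ [2 * k + 3]) =
      (G (3 * m + 4) : ℚ) / (G (3 * m + 1) : ℚ) := by
  have hpos : ∀ n, 0 < G (n + 1) := by
    have h2 : G 2 = k + 1 := by rw [hGrec 0, hG0, hG1]; ring
    intro n
    induction n using Nat.strong_induction_on with
    | _ n ih =>
      match n with
      | 0 => simp [hG1]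
      | 1 => rw [h2]; omega
      | (n + 2) =>
        rw [hGrec (n + 1)]
        have := ih n (by omega)
        have := ih (n + 1) (by omega)
        omega
  induction m with
  | zero =>
    have h2 : G 2 = k + 1 := by rw [hGrec 0, hG0, hG1]; ring
    have h3 : G 3 = k + 2 := by rw [hGrec 1, h2, hG1]; ring
    have h4 : G 4 = 2 * k + 3 := by rw [hGrec 2, h3, h2]; ring
    simp [cf, h4, hG1]
  | succ m ih =>
    have hne : (G (3 * m + 4) : ℚ) ≠ 0 := by
      exact_mod_cast (hpos (3 * m + 3)).ne'
    have hne1 : (G (3 * m + 1) : ℚ) ≠ 0 := by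
      exact_mod_cast (hpos (3 * m)).ne'
    have hrep : List.replicate (m + 1) 4 ++ [2 * k + 3] =
        (4 : ℤ) :: (List.replicate m 4 ++ [2 * k + 3]) := by
      simp [List.replicate_succ]
    have hcons : ∃ b l, List.replicate m 4 ++ [2 * k + 3] = b :: l := by
      cases m with
      | zero => exact ⟨2 * k + 3, [], by simp⟩
      | succ m => exact ⟨4, List.replicate m 4 ++ [2 * k + 3], by simp [List.replicate_succ]⟩
    obtain ⟨b, l, hbl⟩ := hcons
    rw [hrep, hbl, cf, ← hbl, ih]
    have h7 : G (3 * (m + 1) + 4) = 4 * G (3 * m + 4) + G (3 * m + 1) := by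
      have e1 : G (3 * m + 7) = G (3 * m + 6) + G (3 * m + 5) := hGrec (3 * m + 5)
      have e2 : G (3 * m + 6) = G (3 * m + 5) + G (3 * m + 4) := hGrec (3 * m + 4)
      have e3 : G (3 * m + 5) = G (3 * m + 4) + G (3 * m + 3) := hGrec (3 * m + 3)
      have e4 : G (3 * m + 4) = G (3 * m + 3) + G (3 * m + 2) := hGrec (3 * m + 2)
      have e5 : G (3 * m + 3) = G (3 * m + 2) + G (3 * m + 1) := hGrec (3 * m + 1)
      have h : 3 * (m + 1) + 4 = 3 * m + 7 := by ring
      rw [h]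
      omega
    have h7' : 3 * (m + 1) + 1 = 3 * m + 4 := by ring
    rw [h7, h7']
    push_cast
    rw [inv_div]
    field_simp
end

section
/- For every integer k ≥ 0 and every natural number m, the finite simple continued fraction [4,4,…,4,2k+3] consisting of m fours followed by a final entry 2k+3 equals (F_{3m+4} + k·F_{3m+3})/(F_{3m+1} + k·F_{3m}). -/
lemma cf_cons (a : ℤ) (l : List ℤ) (h : l ≠ []) : cf (a :: l) = (a : ℚ) + (cf l)⁻¹ := by
  cases l with
  | nil => exact absurd rfl h
  | cons b t => rfl

lemma fib_add_six (n : ℕ) : Nat.fib (n + 6) = 4 * Nat.fib (n + 3) + Nat.fib n := by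
  simp [show n+6 = (n+4)+2 from rfl, show n+5 = (n+3)+2 from rfl, show n+4 = (n+2)+2 from rfl,
    show n+3 = (n+1)+2 from rfl, Nat.fib_add_two]
  ring

theorem cf_fours_fib (k : ℤ) (hk : 0 ≤ k) (m : ℕ) :
    cf (List.replicate m 4 ++ [2 * k + 3]) =
      ((Nat.fib (3 * m + 4) : ℚ) + (k : ℚ) * (Nat.fib (3 * m + 3) : ℚ)) /
        ((Nat.fib (3 * m + 1) : ℚ) + (k : ℚ) * (Nat.fib (3 * m) : ℚ)) := by
  induction m with
  | zero =>
    show cf [2*k+3] = _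
    simp [cf, Nat.fib]
    push_cast
    ring
  | succ m ih =>
    have hkq : (0 : ℚ) ≤ (k : ℚ) := by exact_mod_cast hk
    have hfibpos : ∀ j : ℕ, 0 < (Nat.fib (j + 1) : ℚ) := by
      intro j; exact_mod_cast Nat.fib_pos.mpr (Nat.succ_pos j)
    have hD : (0 : ℚ) < (Nat.fib (3 * m + 1) : ℚ) + (k : ℚ) * (Nat.fib (3 * m) : ℚ) := by
      have := hfibpos (3 * m)
      have : (0:ℚ) ≤ (k : ℚ) * (Nat.fib (3 * m) : ℚ) :=
        mul_nonneg hkq (by positivity)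
      have := hfibpos (3 * m)
      linarith
    have hN : (0 : ℚ) < (Nat.fib (3 * m + 4) : ℚ) + (k : ℚ) * (Nat.fib (3 * m + 3) : ℚ) := by
      have h1 := hfibpos (3 * m + 3)
      have h2 : (0:ℚ) ≤ (k : ℚ) * (Nat.fib (3 * m + 3) : ℚ) :=
        mul_nonneg hkq (by positivity)
      linarith
    have hrepl : List.replicate (m + 1) 4 ++ [2 * k + 3]
        = (4 : ℤ) :: (List.replicate m 4 ++ [2 * k + 3]) := by
      simp [List.replicate_succ]
    rw [hrepl, cf_cons _ _ (by simp), ih]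
    have e1 : Nat.fib (3 * (m+1) + 4) = 4 * Nat.fib (3 * m + 4) + Nat.fib (3 * m + 1) := by
      have := fib_add_six (3 * m + 1)
      convert this using 2 <;> ring
    have e2 : Nat.fib (3 * (m+1) + 3) = 4 * Nat.fib (3 * m + 3) + Nat.fib (3 * m) := by
      have := fib_add_six (3 * m)
      convert this using 2 <;> ring
    have e3 : Nat.fib (3 * (m+1) + 1) = Nat.fib (3 * m + 4) := by ring_nf
    have e4 : Nat.fib (3 * (m+1)) = Nat.fib (3 * m + 3) := by ring_nf
    rw [e1, e2, e3, e4]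
    rw [inv_div]
    push_cast
    field_simp
    ring
end

section
/- For every natural number m, the finite simple continued fraction [11,11,…,11] consisting of m+1 elevens equals F_{5m+10}/F_{5m+5}. -/
lemma fiblem (n : ℕ) : Nat.fib (n+10) = 11 * Nat.fib (n+5) + Nat.fib n := by
  have h : ∀ k, Nat.fib (k+2) = Nat.fib k + Nat.fib (k+1) := fun k => Nat.fib_add_two
  have h0 : Nat.fib (n+2) = Nat.fib n + Nat.fib (n+1) := h n
  have h1 : Nat.fib (n+3) = Nat.fib (n+1) + Nat.fib (n+2) := h (n+1)
  have h2 : Nat.fib (n+4) = Nat.fib (n+2) + Nat.fib (n+3) := h (n+2)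
  have h3 : Nat.fib (n+5) = Nat.fib (n+3) + Nat.fib (n+4) := h (n+3)
  have h4 : Nat.fib (n+6) = Nat.fib (n+4) + Nat.fib (n+5) := h (n+4)
  have h5 : Nat.fib (n+7) = Nat.fib (n+5) + Nat.fib (n+6) := h (n+5)
  have h6 : Nat.fib (n+8) = Nat.fib (n+6) + Nat.fib (n+7) := h (n+6)
  have h7 : Nat.fib (n+9) = Nat.fib (n+7) + Nat.fib (n+8) := h (n+7)
  have h8 : Nat.fib (n+10) = Nat.fib (n+8) + Nat.fib (n+9) := h (n+8)
  omega

theorem cf_all_elevens_fib (m : ℕ) :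
    cf (List.replicate (m + 1) 11) =
      (Nat.fib (5 * m + 10) : ℚ) / (Nat.fib (5 * m + 5) : ℚ) := by
  induction m with
  | zero => simp [cf]; norm_num [Nat.fib]
  | succ k ih =>
    have hrep : List.replicate (k + 1 + 1) (11:ℤ) = 11 :: 11 :: List.replicate k 11 := by
      simp [List.replicate_succ]
    rw [hrep]
    have hrep2 : List.replicate (k + 1) (11:ℤ) = 11 :: List.replicate k 11 := by
      simp [List.replicate_succ]
    rw [hrep2] at ih
    have hA : (0:ℚ) < Nat.fib (5*k+5) := by
      exact_mod_cast Nat.fib_pos.mpr (by omega)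
    have hB : (0:ℚ) < Nat.fib (5*k+10) := by
      exact_mod_cast Nat.fib_pos.mpr (by omega)
    have key : Nat.fib (5*(k+1)+10) = 11 * Nat.fib (5*k+10) + Nat.fib (5*k+5) := by
      have := fiblem (5*k+5)
      convert this using 2 <;> omega
    show (11:ℚ) + (cf (11 :: List.replicate k 11))⁻¹ = _
    rw [ih, key]
    have h1 : (5*(k+1)+5) = 5*k+10 := by omega
    rw [h1]
    push_cast
    rw [inv_div]
    field_simp
end

section
/- For every natural number m, the finite simple continued fraction [4,4,…,4] consisting of m+1 fours equals F_{3m+6}/F_{3m+3}. -/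
theorem cf_all_fours_fib (m : ℕ) :
    cf (List.replicate (m + 1) 4) =
      (Nat.fib (3 * m + 6) : ℚ) / (Nat.fib (3 * m + 3) : ℚ) := by
  induction m with
  | zero => norm_num [cf]
  | succ k ih =>
    have hrep : List.replicate (k + 2) 4 = (4 : ℤ) :: List.replicate (k + 1) 4 := rfl
    have hrep' : List.replicate (k + 1) 4 = (4 : ℤ) :: List.replicate k 4 := rfl
    have hcf : cf (List.replicate (k + 2) 4) = 4 + (cf (List.replicate (k + 1) 4))⁻¹ := by
      rw [hrep, hrep']; rfl
    have hb : (0 : ℚ) < Nat.fib (3 * k + 3) := by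
      exact_mod_cast Nat.fib_pos.mpr (by omega)
    have ht : (0 : ℚ) < Nat.fib (3 * k + 6) := by
      exact_mod_cast Nat.fib_pos.mpr (by omega)
    have key : Nat.fib (3 * (k+1) + 6) = 4 * Nat.fib (3 * k + 6) + Nat.fib (3 * k + 3) := by
      have := fib_add_six (3 * k + 3)
      convert this using 2 <;> omega
    have h33 : 3 * (k + 1) + 3 = 3 * k + 6 := by ring
    rw [hcf, ih, key, h33]
    push_cast
    rw [inv_div]
    field_simp
end
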